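/- arXiv:1305.2826 — 4 statements merged into one kernel-verified Lean document; each statement's English description precedes it below -/
import Mathlib

section
/- For all vectors w, t ∈ Q and all indices 1 ≤ i, k ≤ m, the commutator [E_{i,w}, E_{k,t}] acts on M by [E_{i,w}, E_{k,t}](z, x, f) = (z, x + f(x_i)·⟨t,w⟩·x_k − f(x_k)·⟨w,t⟩·x_i, f). In particular, if i = k then [E_{i,w}, E_{k,t}] is the identity automorphism of M. -/
open QuadraticMap
open scoped commutatorElement

/-- The DSER elementary orthogonal transformation `E_{i,w}` on `M = Q ⊕ P ⊕ P*`,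
`P = A^m`:  `E_{i,w}(z,x,f) = (z − f(xᵢ)•w, x + ⟨w,z⟩•xᵢ − f(xᵢ)·q(w)•xᵢ, f)`. -/
noncomputable def Eplus {A Q : Type*} [CommRing A] [AddCommGroup Q] [Module A Q]
    {m : ℕ} (q : QuadraticForm A Q) (i : Fin m) (w : Q) :
    (Q × (Fin m → A) × (Fin m → A)) ≃ₗ[A] (Q × (Fin m → A) × (Fin m → A)) where
  toFun p := (p.1 - p.2.2 i • w,
    p.2.1 + polar ⇑q w p.1 • (Pi.single i 1 : Fin m → A)
      - (p.2.2 i * q w) • (Pi.single i 1 : Fin m → A),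
    p.2.2)
  invFun p := (p.1 + p.2.2 i • w,
    p.2.1 - polar ⇑q w p.1 • (Pi.single i 1 : Fin m → A)
      - (p.2.2 i * q w) • (Pi.single i 1 : Fin m → A),
    p.2.2)
  map_add' p p' := by
    obtain ⟨z, x, f⟩ := p
    obtain ⟨z', x', f'⟩ := p'
    refine Prod.ext ?_ (Prod.ext ?_ rfl)
    · show z + z' - (f i + f' i) • w = (z - f i • w) + (z' - f' i • w)
      module
    · show x + x' + polar ⇑q w (z + z') • (Pi.single i 1 : Fin m → A)
        - ((f i + f' i) * q w) • (Pi.single i 1 : Fin m → A) = _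
      rw [polar_add_right]
      show _ = (x + polar ⇑q w z • (Pi.single i 1 : Fin m → A) - (f i * q w) • (Pi.single i 1 : Fin m → A))
        + (x' + polar ⇑q w z' • (Pi.single i 1 : Fin m → A) - (f' i * q w) • (Pi.single i 1 : Fin m → A))
      module
  map_smul' a p := by
    obtain ⟨z, x, f⟩ := p
    refine Prod.ext ?_ (Prod.ext ?_ rfl)
    · show a • z - (a • f) i • w = a • (z - f i • w)
      simp only [Pi.smul_apply, smul_eq_mul]
      module
    · show a • x + polar ⇑q w (a • z) • (Pi.single i 1 : Fin m → A)
        - ((a • f) i * q w) • (Pi.single i 1 : Fin m → A)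
        = a • (x + polar ⇑q w z • (Pi.single i 1 : Fin m → A) - (f i * q w) • (Pi.single i 1 : Fin m → A))
      rw [polar_smul_right]
      simp only [Pi.smul_apply, smul_eq_mul]
      module
  left_inv p := by
    obtain ⟨z, x, f⟩ := p
    refine Prod.ext ?_ (Prod.ext ?_ rfl)
    · show z - f i • w + f i • w = z
      module
    · show x + polar ⇑q w z • (Pi.single i 1 : Fin m → A) - (f i * q w) • (Pi.single i 1 : Fin m → A)
        - polar ⇑q w (z - f i • w) • (Pi.single i 1 : Fin m → A)
        - (f i * q w) • (Pi.single i 1 : Fin m → A) = x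
      rw [polar_sub_right, polar_smul_right, polar_self]
      simp only [smul_eq_mul]
      module
  right_inv p := by
    obtain ⟨z, x, f⟩ := p
    refine Prod.ext ?_ (Prod.ext ?_ rfl)
    · show z + f i • w - f i • w = z
      module
    · show x - polar ⇑q w z • (Pi.single i 1 : Fin m → A) - (f i * q w) • (Pi.single i 1 : Fin m → A)
        + polar ⇑q w (z + f i • w) • (Pi.single i 1 : Fin m → A)
        - (f i * q w) • (Pi.single i 1 : Fin m → A) = x
      rw [polar_add_right, polar_smul_right, polar_self]
      simp only [smul_eq_mul]
      module

/-- The DSER elementary orthogonal transformation `E*_{i,w}` on `M = Q ⊕ P ⊕ P*`: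
`E*_{i,w}(z,x,f) = (z − fᵢ(x)•w, x, f + ⟨w,z⟩•fᵢ − fᵢ(x)·q(w)•fᵢ)`. -/
noncomputable def Estar {A Q : Type*} [CommRing A] [AddCommGroup Q] [Module A Q]
    {m : ℕ} (q : QuadraticForm A Q) (i : Fin m) (w : Q) :
    (Q × (Fin m → A) × (Fin m → A)) ≃ₗ[A] (Q × (Fin m → A) × (Fin m → A)) where
  toFun p := (p.1 - p.2.1 i • w,
    p.2.1,
    p.2.2 + polar ⇑q w p.1 • (Pi.single i 1 : Fin m → A)
      - (p.2.1 i * q w) • (Pi.single i 1 : Fin m → A))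
  invFun p := (p.1 + p.2.1 i • w,
    p.2.1,
    p.2.2 - polar ⇑q w p.1 • (Pi.single i 1 : Fin m → A)
      - (p.2.1 i * q w) • (Pi.single i 1 : Fin m → A))
  map_add' p p' := by
    obtain ⟨z, x, f⟩ := p
    obtain ⟨z', x', f'⟩ := p'
    refine Prod.ext ?_ (Prod.ext rfl ?_)
    · show z + z' - (x i + x' i) • w = (z - x i • w) + (z' - x' i • w)
      module
    · show f + f' + polar ⇑q w (z + z') • (Pi.single i 1 : Fin m → A)
        - ((x i + x' i) * q w) • (Pi.single i 1 : Fin m → A) = _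
      rw [polar_add_right]
      show _ = (f + polar ⇑q w z • (Pi.single i 1 : Fin m → A)
          - (x i * q w) • (Pi.single i 1 : Fin m → A))
        + (f' + polar ⇑q w z' • (Pi.single i 1 : Fin m → A)
          - (x' i * q w) • (Pi.single i 1 : Fin m → A))
      module
  map_smul' a p := by
    obtain ⟨z, x, f⟩ := p
    refine Prod.ext ?_ (Prod.ext rfl ?_)
    · show a • z - (a • x) i • w = a • (z - x i • w)
      simp only [Pi.smul_apply, smul_eq_mul]
      module
    · show a • f + polar ⇑q w (a • z) • (Pi.single i 1 : Fin m → A)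
        - ((a • x) i * q w) • (Pi.single i 1 : Fin m → A)
        = a • (f + polar ⇑q w z • (Pi.single i 1 : Fin m → A)
          - (x i * q w) • (Pi.single i 1 : Fin m → A))
      rw [polar_smul_right]
      simp only [Pi.smul_apply, smul_eq_mul]
      module
  left_inv p := by
    obtain ⟨z, x, f⟩ := p
    refine Prod.ext ?_ (Prod.ext rfl ?_)
    · show z - x i • w + x i • w = z
      module
    · show f + polar ⇑q w z • (Pi.single i 1 : Fin m → A)
        - (x i * q w) • (Pi.single i 1 : Fin m → A)
        - polar ⇑q w (z - x i • w) • (Pi.single i 1 : Fin m → A)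
        - (x i * q w) • (Pi.single i 1 : Fin m → A) = f
      rw [polar_sub_right, polar_smul_right, polar_self]
      simp only [smul_eq_mul]
      module
  right_inv p := by
    obtain ⟨z, x, f⟩ := p
    refine Prod.ext ?_ (Prod.ext rfl ?_)
    · show z + x i • w - x i • w = z
      module
    · show f - polar ⇑q w z • (Pi.single i 1 : Fin m → A)
        - (x i * q w) • (Pi.single i 1 : Fin m → A)
        + polar ⇑q w (z + x i • w) • (Pi.single i 1 : Fin m → A)
        - (x i * q w) • (Pi.single i 1 : Fin m → A) = f
      rw [polar_add_right, polar_smul_right, polar_self]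
      simp only [smul_eq_mul]
      module

/-! Both factors fix `f` and `E_{i,w}⁻¹ = E_{i,-w}`, so the commutator is the product of the two
composites `E_{i,w} E_{k,t}` and `E_{i,-w} E_{k,-t}`, each given by one closed formula. Their
`Q`-shifts cancel, and in the `P`-component only the cross terms `f(xᵢ)⟨t,w⟩` and `f(x_k)⟨w,t⟩`
survive; for `i = k` these cancel by symmetry of the polar form. -/

section Eplus

variable {A Q : Type*} [CommRing A] [AddCommGroup Q] [Module A Q] {m : ℕ}
  (q : QuadraticForm A Q)

@[simp]
theorem Eplus_apply (i : Fin m) (w z : Q) (x f : Fin m → A) :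
    Eplus q i w (z, x, f) =
      (z - f i • w,
       x + polar ⇑q w z • (Pi.single i 1 : Fin m → A) - (f i * q w) • (Pi.single i 1 : Fin m → A),
       f) :=
  rfl

theorem Eplus_inv (i : Fin m) (w : Q) : (Eplus q i w)⁻¹ = Eplus q i (-w) := by
  ext ⟨z, x, f⟩ : 1
  change ((z + f i • w,
      x - polar ⇑q w z • (Pi.single i 1 : Fin m → A) - (f i * q w) • (Pi.single i 1 : Fin m → A),
      f) : Q × (Fin m → A) × (Fin m → A)) = _
  rw [Eplus_apply, polar_neg_left, QuadraticMap.map_neg]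
  exact Prod.ext (by module) (Prod.ext (by module) rfl)

theorem Eplus_mul_Eplus_apply (i k : Fin m) (w t z : Q) (x f : Fin m → A) :
    (Eplus q i w * Eplus q k t) (z, x, f) =
      (z - f i • w - f k • t,
       x + (polar ⇑q t z - f k * q t) • (Pi.single k 1 : Fin m → A)
         + (polar ⇑q w z - f k * polar ⇑q w t - f i * q w) • (Pi.single i 1 : Fin m → A),
       f) := by
  refine Prod.ext (by simp only [LinearEquiv.mul_apply, Eplus_apply]; module) (Prod.ext ?_ rfl)
  simp only [LinearEquiv.mul_apply, Eplus_apply, polar_sub_right, polar_smul_right, smul_eq_mul]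
  module

theorem commutator_Eplus_Eplus_apply (i k : Fin m) (w t z : Q) (x f : Fin m → A) :
    ⁅Eplus q i w, Eplus q k t⁆ (z, x, f)
      = (z,
         x + (f i * polar ⇑q t w) • (Pi.single k 1 : Fin m → A)
           - (f k * polar ⇑q w t) • (Pi.single i 1 : Fin m → A),
         f) := by
  rw [commutatorElement_def, mul_assoc, LinearEquiv.mul_apply, Eplus_inv, Eplus_inv,
    Eplus_mul_Eplus_apply, Eplus_mul_Eplus_apply]
  refine Prod.ext (by module) (Prod.ext ?_ rfl)
  simp only [polar_neg_left, polar_neg_right, polar_sub_right, polar_smul_right,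
    polar_self, QuadraticMap.map_neg, smul_eq_mul]
  module

end Eplus

theorem commutator_Eplus_Eplus_general
    {A Q : Type*} [CommRing A] [AddCommGroup Q] [Module A Q]
    {m : ℕ} (q : QuadraticForm A Q) (i k : Fin m) (w t : Q) :
    (∀ (z : Q) (x f : Fin m → A),
      ⁅Eplus q i w, Eplus q k t⁆ (z, x, f)
        = (z,
           x + (f i * polar ⇑q t w) • (Pi.single k 1 : Fin m → A)
             - (f k * polar ⇑q w t) • (Pi.single i 1 : Fin m → A),
           f)) ∧
    (i = k → ⁅Eplus q i w, Eplus q k t⁆ = 1) := by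
  refine ⟨commutator_Eplus_Eplus_apply q i k w t, ?_⟩
  rintro rfl
  ext ⟨z, x, f⟩ : 1
  rw [commutator_Eplus_Eplus_apply, polar_comm ⇑q t w, add_sub_cancel_right]
  rfl

theorem commutator_Eplus_Eplus
    {A Q : Type*} [CommRing A] [Invertible (2 : A)] [AddCommGroup Q] [Module A Q]
    {m : ℕ} (q : QuadraticForm A Q) (i k : Fin m) (w t : Q) :
    (∀ (z : Q) (x f : Fin m → A),
      ⁅Eplus q i w, Eplus q k t⁆ (z, x, f)
        = (z,
           x + (f i * polar ⇑q t w) • (Pi.single k 1 : Fin m → A)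
             - (f k * polar ⇑q w t) • (Pi.single i 1 : Fin m → A),
           f)) ∧
    (i = k → ⁅Eplus q i w, Eplus q k t⁆ = 1) :=
  commutator_Eplus_Eplus_general q i k w t
end

section
/- For all vectors w, v ∈ Q, all indices 1 ≤ i, k ≤ m with i ≠ k, and all scalars a, b, c, d ∈ A with ab = cd, the mixed commutators [E_{i,a·w}, E*_{k,b·v}] and [E_{i,c·w}, E*_{k,d·v}] are equal as automorphisms of M. -/
open QuadraticMap
open scoped commutatorElement

/-! For `i ≠ k`, every term of `[E_{i,u}, E*_{k,s}]` involving `q u`, `q s` or the `Q`-component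
cancels, leaving a unipotent map that depends on `u` and `s` only through `⟨u,s⟩`; and
`⟨a•w, b•v⟩ = ab⟨w,v⟩`. -/

section Commutator

variable {A Q : Type*} [CommRing A] [AddCommGroup Q] [Module A Q] {m : ℕ}
  (q : QuadraticForm A Q)

theorem commutator_Eplus_Estar_apply {i k : Fin m} (hik : i ≠ k) (u s : Q)
    (p : Q × (Fin m → A) × (Fin m → A)) :
    ⁅Eplus q i u, Estar q k s⁆ p
      = (p.1,
         p.2.1 - (polar q u s * p.2.1 k) • (Pi.single i 1 : Fin m → A),
         p.2.2 + (polar q u s * p.2.2 i) • (Pi.single k 1 : Fin m → A)) := by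
  obtain ⟨z, x, f⟩ := p
  simp only [commutatorElement_def, LinearEquiv.mul_apply, LinearEquiv.coe_inv, Eplus, Estar,
    LinearEquiv.coe_symm_mk, LinearEquiv.coe_mk, LinearMap.coe_mk, AddHom.coe_mk,
    Pi.add_apply, Pi.sub_apply, Pi.smul_apply, smul_eq_mul,
    Pi.single_eq_of_ne hik, Pi.single_eq_of_ne hik.symm, mul_zero, sub_zero, add_zero,
    polar_add_right, polar_sub_right, polar_smul_right, polar_self, polar_comm q s u]
  refine Prod.ext ?_ (Prod.ext ?_ ?_) <;> match_scalars <;> ring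

theorem commutator_Eplus_Estar_eq_of_polar_eq {i k : Fin m} (hik : i ≠ k) {u s u' s' : Q}
    (h : polar q u s = polar q u' s') :
    ⁅Eplus q i u, Estar q k s⁆ = ⁅Eplus q i u', Estar q k s'⁆ :=
  LinearEquiv.ext fun p => by
    rw [commutator_Eplus_Estar_apply q hik, commutator_Eplus_Estar_apply q hik, h]

end Commutator

theorem commutator_Eplus_Estar_scaling_general
    {A Q : Type*} [CommRing A] [AddCommGroup Q] [Module A Q]
    {m : ℕ} (q : QuadraticForm A Q) (i k : Fin m) (hik : i ≠ k) (w v : Q)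
    (a b c d : A) (h : a * b = c * d) :
    ⁅Eplus q i (a • w), Estar q k (b • v)⁆
      = ⁅Eplus q i (c • w), Estar q k (d • v)⁆ := by
  refine commutator_Eplus_Estar_eq_of_polar_eq q hik ?_
  rw [polar_smul_left, polar_smul_right, polar_smul_left, polar_smul_right]
  simp only [smul_eq_mul, ← mul_assoc, h]

theorem commutator_Eplus_Estar_scaling
    {A Q : Type*} [CommRing A] [Invertible (2 : A)] [AddCommGroup Q] [Module A Q]
    {m : ℕ} (q : QuadraticForm A Q) (i k : Fin m) (hik : i ≠ k) (w v : Q)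
    (a b c d : A) (h : a * b = c * d) :
    ⁅Eplus q i (a • w), Estar q k (b • v)⁆
      = ⁅Eplus q i (c • w), Estar q k (d • v)⁆ :=
  commutator_Eplus_Estar_scaling_general q i k hik w v a b c d h
end

section
/- For all vectors v, c ∈ Q and all indices 1 ≤ i, k ≤ m, the commutator [E*_{i,v}, E*_{k,c}] acts on M by [E*_{i,v}, E*_{k,c}](z, x, f) = (z, x, f + f_i(x)·⟨c,v⟩·f_k − f_k(x)·⟨v,c⟩·f_i). In particular, if i = k then [E*_{i,v}, E*_{k,c}] is the identity automorphism of M. -/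
open QuadraticMap
open scoped commutatorElement

section Estar

variable {A Q : Type*} [CommRing A] [AddCommGroup Q] [Module A Q] {m : ℕ}
  (q : QuadraticForm A Q)

lemma Estar_apply (i : Fin m) (w z : Q) (x f : Fin m → A) :
    Estar q i w (z, x, f) =
      (z - x i • w, x,
        f + polar ⇑q w z • (Pi.single i 1 : Fin m → A) - (x i * q w) • Pi.single i 1) :=
  rfl

lemma Estar_symm_apply (i : Fin m) (w z : Q) (x f : Fin m → A) :
    (Estar q i w).symm (z, x, f) =
      (z + x i • w, x,
        f - polar ⇑q w z • (Pi.single i 1 : Fin m → A) - (x i * q w) • Pi.single i 1) :=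
  rfl

lemma commutator_Estar_Estar_apply (i k : Fin m) (v c z : Q) (x f : Fin m → A) :
    ⁅Estar q i v, Estar q k c⁆ (z, x, f) =
      (z, x,
        f + (x i * polar ⇑q c v) • (Pi.single k 1 : Fin m → A)
          - (x k * polar ⇑q v c) • Pi.single i 1) := by
  change Estar q i v (Estar q k c ((Estar q i v).symm ((Estar q k c).symm (z, x, f)))) = _
  simp only [Estar_apply, Estar_symm_apply, Prod.mk.injEq, true_and]
  constructor
  · abel
  · simp only [polar_add_right, polar_sub_right, polar_smul_right, polar_self, smul_eq_mul]
    match_scalars <;> ring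

lemma commutator_Estar_Estar_self (i : Fin m) (v c : Q) :
    ⁅Estar q i v, Estar q i c⁆ = 1 := by
  ext ⟨z, x, f⟩ : 1
  rw [commutator_Estar_Estar_apply, polar_comm _ c v, add_sub_cancel_right]
  rfl

end Estar

theorem commutator_Estar_Estar_general
    {A Q : Type*} [CommRing A] [AddCommGroup Q] [Module A Q]
    {m : ℕ} (q : QuadraticForm A Q) (i k : Fin m) (v c : Q) :
    (∀ (z : Q) (x f : Fin m → A),
      ⁅Estar q i v, Estar q k c⁆ (z, x, f)
        = (z, x,
           f + (x i * polar ⇑q c v) • (Pi.single k 1 : Fin m → A)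
             - (x k * polar ⇑q v c) • (Pi.single i 1 : Fin m → A))) ∧
    (i = k → ⁅Estar q i v, Estar q k c⁆ = 1) := by
  refine ⟨commutator_Estar_Estar_apply q i k v c, ?_⟩
  rintro rfl
  exact commutator_Estar_Estar_self q i v c

theorem commutator_Estar_Estar
    {A Q : Type*} [CommRing A] [Invertible (2 : A)] [AddCommGroup Q] [Module A Q]
    {m : ℕ} (q : QuadraticForm A Q) (i k : Fin m) (v c : Q) :
    (∀ (z : Q) (x f : Fin m → A),
      ⁅Estar q i v, Estar q k c⁆ (z, x, f)
        = (z, x,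
           f + (x i * polar ⇑q c v) • (Pi.single k 1 : Fin m → A)
             - (x k * polar ⇑q v c) • (Pi.single i 1 : Fin m → A))) ∧
    (i = k → ⁅Estar q i v, Estar q k c⁆ = 1) :=
  commutator_Estar_Estar_general q i k v c
end

section
/- For all vectors v, u ∈ Q, all indices 1 ≤ i, k ≤ m, and all scalars a, b, c, d ∈ A with ab = cd, the commutators [E*_{i,a·v}, E*_{k,b·u}] and [E*_{i,c·v}, E*_{k,d·u}] are equal as automorphisms of M. -/
open QuadraticMap
open scoped commutatorElement

/- The commutator of two `E*` transformations fixes `Q ⊕ P` and shears `P*` by a map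
depending on `w, w'` only through `⟨w, w'⟩`; the scalings in the theorem leave this pairing
unchanged, since it becomes `(a * b) ⟨v, u⟩`. -/

section Estar

variable {A Q : Type*} [CommRing A] [AddCommGroup Q] [Module A Q] {m : ℕ}
  (q : QuadraticForm A Q)

theorem Estar_commutator_apply (i k : Fin m) (w w' : Q) (p : Q × (Fin m → A) × (Fin m → A)) :
    ⁅Estar q i w, Estar q k w'⁆ p
      = (p.1, p.2.1, p.2.2 - (p.2.1 k * polar q w w') • (Pi.single i 1 : Fin m → A)
          + (p.2.1 i * polar q w w') • (Pi.single k 1 : Fin m → A)) := by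
  obtain ⟨z, x, f⟩ := p
  show Estar q i w (Estar q k w' ((Estar q i w).symm ((Estar q k w').symm (z, x, f)))) = _
  simp only [Estar, LinearEquiv.coe_mk, LinearEquiv.coe_symm_mk,
    LinearMap.coe_mk, AddHom.coe_mk]
  refine Prod.ext ?_ (Prod.ext rfl ?_)
  · show z + x k • w' + x i • w - x k • w' - x i • w = z
    module
  · simp only [polar_sub_right, polar_add_right, polar_smul_right, polar_self, smul_eq_mul,
      polar_comm q w' w]
    module

theorem Estar_commutator_eq_of_polar_eq (i k : Fin m) {w₁ w₁' w₂ w₂' : Q}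
    (h : polar q w₁ w₁' = polar q w₂ w₂') :
    ⁅Estar q i w₁, Estar q k w₁'⁆ = ⁅Estar q i w₂, Estar q k w₂'⁆ :=
  LinearEquiv.ext fun p => by rw [Estar_commutator_apply, Estar_commutator_apply, h]

end Estar

theorem QuadraticMap.polar_smul_smul {R M N : Type*} [CommRing R] [AddCommGroup M] [Module R M]
    [AddCommGroup N] [Module R N] (q : QuadraticMap R M N) (a b : R) (v u : M) :
    polar q (a • v) (b • u) = (a * b) • polar q v u := by
  rw [polar_smul_left, polar_smul_right, smul_smul]

theorem commutator_Estar_Estar_scaling_general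
    {A Q : Type*} [CommRing A] [AddCommGroup Q] [Module A Q]
    {m : ℕ} (q : QuadraticForm A Q) (i k : Fin m) (v u : Q)
    (a b c d : A) (h : a * b = c * d) :
    ⁅Estar q i (a • v), Estar q k (b • u)⁆
      = ⁅Estar q i (c • v), Estar q k (d • u)⁆ :=
  Estar_commutator_eq_of_polar_eq q i k (by rw [polar_smul_smul, polar_smul_smul, h])

theorem commutator_Estar_Estar_scaling
    {A Q : Type*} [CommRing A] [Invertible (2 : A)] [AddCommGroup Q] [Module A Q]
    {m : ℕ} (q : QuadraticForm A Q) (i k : Fin m) (v u : Q)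
    (a b c d : A) (h : a * b = c * d) :
    ⁅Estar q i (a • v), Estar q k (b • u)⁆
      = ⁅Estar q i (c • v), Estar q k (d • u)⁆ :=
  commutator_Estar_Estar_scaling_general q i k v u a b c d h
end
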